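/- Let P = (P_1,…,P_n) ∈ (K^×)^n and suppose that not every coordinate P_i is a root of unity. Then there exist a nonempty subset J = {j_1 < … < j_s} of {1,…,n} and a nonzero integer d such that P_{j_1},…,P_{j_s} are multiplicatively independent and, for all but finitely many primes 𝔭 of K, the order of (P mod 𝔭) divides d times the order of (P' mod 𝔭), where P' = (P_{j_1},…,P_{j_s}) ∈ (K^×)^s. -/

import Mathlib

open NumberField

/-- `x ≡ 1 (mod 𝔭)` for `x ∈ K`: there is a representation `x = a/b` with `a, b`
integral, `b ∉ 𝔭` and `a ≡ b (mod 𝔭)`. -/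
def RedOne (K : Type*) [Field K] [NumberField K] (𝔭 : Ideal (𝓞 K)) (x : K) : Prop :=
  ∃ a b : 𝓞 K, b ∉ 𝔭 ∧ (algebraMap (𝓞 K) K b) * x = algebraMap (𝓞 K) K a ∧ a - b ∈ 𝔭

/-- The order of the reduction of `P ∈ (K^×)^n` modulo `𝔭`: the least `k > 0` such that
every coordinate of `P^k` reduces to `1` modulo `𝔭` (junk value `0` at the finitely many
bad primes, where no such `k` exists). -/
noncomputable def redOrder (K : Type*) [Field K] [NumberField K] {n : ℕ}
    (𝔭 : Ideal (𝓞 K)) (P : Fin n → Kˣ) : ℕ :=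
  sInf {k | 0 < k ∧ ∀ i, RedOne K 𝔭 ((P i : K) ^ k)}

/-!
Take a maximal multiplicatively independent subfamily `P_j` of the coordinates (a maximal
`ℤ`-linearly independent subfamily in `Additive Kˣ`). By maximality every `P_i` has a nonzero power
`P_i ^ c_i` in the group generated by the `P_j`, and the subfamily is nonempty because some `P_i` has
infinite order. Reduction modulo `𝔭` is the quotient map by the subgroup of units reducing to `1`,
so if `m` kills the reduction of every `P_j`, then `(∏ c_i) * m` kills the reduction of every `P_i`.
No prime has to be excluded: where the order of `P'` is the junk value `0`, the divisibility is
trivial.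
-/

section CommGroup

variable {G : Type*} [CommGroup G]

theorem orderOf_dvd_prod_mul_orderOf_of_zpow_mem_closure {ι κ : Type*} [Fintype ι]
    {x : ι → G} {y : κ → G} (c : ι → ℤ)
    (hc : ∀ i, x i ^ c i ∈ Subgroup.closure (Set.range y)) :
    (orderOf x : ℤ) ∣ (∏ i, c i) * orderOf y := by
  set m := orderOf y
  have hkill : ∀ g ∈ Subgroup.closure (Set.range y), g ^ m = 1 := by
    refine fun g hg => MonoidHom.mem_ker.mp <| (Subgroup.closure_le (powMonoidHom m).ker).mpr ?_ hg
    rintro _ ⟨k, rfl⟩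
    exact congrFun (pow_orderOf_eq_one y) k
  rw [orderOf_dvd_iff_zpow_eq_one]
  funext i
  obtain ⟨e, he⟩ := Finset.dvd_prod_of_mem c (Finset.mem_univ i)
  calc (x ^ ((∏ i, c i) * m)) i = ((x i ^ c i) ^ m) ^ e := by
        rw [Pi.pow_apply, he, ← zpow_natCast, ← zpow_mul, ← zpow_mul, mul_right_comm, mul_assoc]
    _ = 1 := by rw [hkill _ (hc i), one_zpow]

theorem exists_independent_subfamily_zpow_mem_closure {ι : Type*} [LinearOrder ι]
    [Fintype ι] (P : ι → G) :
    ∃ (s : ℕ) (j : Fin s → ι), StrictMono j ∧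
      (∀ a : Fin s → ℤ, ∏ i, P (j i) ^ a i = 1 → a = 0) ∧
      ∀ i, ∃ c : ℤ, c ≠ 0 ∧ P i ^ c ∈ Subgroup.closure (Set.range (P ∘ j)) := by
  classical
  obtain ⟨S, hS, hmax⟩ := exists_maximal_linearIndepOn ℤ (fun i => Additive.ofMul (P i))
  set j := S.toFinset.orderEmbOfFin rfl
  have hrange : Set.range j = S := by simp [j, Finset.range_orderEmbOfFin]
  refine ⟨_, j, j.strictMono, fun a ha => ?_, fun i => ?_⟩
  · have := (linearIndepOn_range_iff j.injective _).mp (hrange ▸ hS)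
    rw [Fintype.linearIndependent_iff] at this
    funext i
    exact this a (by simpa [← ofMul_zpow, ← ofMul_prod] using congrArg Additive.ofMul ha) i
  · have hmem : ∀ k ∈ S, P k ∈ Subgroup.closure (Set.range (P ∘ j)) := by
      intro k hk
      obtain ⟨l, rfl⟩ : k ∈ Set.range j := hrange.symm ▸ hk
      exact Subgroup.subset_closure ⟨l, rfl⟩
    by_cases hi : i ∈ S
    · exact ⟨1, one_ne_zero, by simpa using hmem i hi⟩
    obtain ⟨c, hc0, hc⟩ := hmax i hi
    have hle : Submodule.span ℤ ((fun i => Additive.ofMul (P i)) '' S) ≤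
        (Subgroup.closure (Set.range (P ∘ j))).toAddSubgroup.toIntSubmodule :=
      Submodule.span_le.mpr fun _ ⟨k, hk, hx⟩ => hx ▸ hmem k hk
    exact ⟨c, hc0, hle hc⟩

end CommGroup

section RedOne

variable (K : Type*) [Field K] [NumberField K] (𝔭 : Ideal (𝓞 K)) [𝔭.IsPrime]

def redOneSubgroup : Subgroup Kˣ where
  carrier := {u | RedOne K 𝔭 u}
  one_mem' := ⟨1, 1, Ideal.one_notMem 𝔭, by simp, by simp⟩
  mul_mem' := by
    rintro u v ⟨a₁, b₁, hb₁, he₁, hm₁⟩ ⟨a₂, b₂, hb₂, he₂, hm₂⟩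
    refine ⟨a₁ * a₂, b₁ * b₂, Ideal.IsPrime.mul_notMem ‹_› hb₁ hb₂, ?_,
      Ideal.mul_sub_mul_mem 𝔭 hm₁ hm₂⟩
    simp only [map_mul, Units.val_mul, ← he₁, ← he₂]
    ring
  inv_mem' := by
    rintro u ⟨a, b, hb, he, hm⟩
    have ha : a ∉ 𝔭 := fun ha => hb (by simpa using Ideal.sub_mem 𝔭 ha hm)
    refine ⟨b, a, ha, ?_, by simpa using neg_mem hm⟩
    rw [Units.val_inv_eq_inv_val, mul_inv_eq_iff_eq_mul₀ u.ne_zero, ← he]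

theorem redOrder_eq_orderOf {n : ℕ} (P : Fin n → Kˣ) :
    redOrder K 𝔭 P = orderOf (QuotientGroup.mk' (redOneSubgroup K 𝔭) ∘ P) := by
  rw [redOrder, Pi.orderOf_eq_sInf]
  congr 1
  ext k
  refine and_congr_right' (forall_congr' fun i => ?_)
  rw [orderOf_dvd_iff_pow_eq_one, Function.comp_apply, ← map_pow, QuotientGroup.mk'_apply,
    QuotientGroup.eq_one_iff]
  rfl

end RedOne

/-- Lemma 6 in the split-torus case: a point not entirely made of roots of unity is
controlled, up to a bounded factor `d`, by a multiplicatively independent subtuple of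
its coordinates. -/
theorem order_controlled_by_independent_subtuple
    {K : Type*} [Field K] [NumberField K] {n : ℕ}
    (P : Fin n → Kˣ) (hP : ∃ i, ¬ IsOfFinOrder (P i)) :
    ∃ (s : ℕ) (j : Fin s → Fin n), 0 < s ∧ StrictMono j ∧
      (∀ a : Fin s → ℤ, (∏ i, P (j i) ^ a i) = 1 → a = 0) ∧
      ∃ d : ℤ, d ≠ 0 ∧
        ∃ T : Finset (Ideal (𝓞 K)), ∀ 𝔭 : Ideal (𝓞 K), 𝔭.IsMaximal → 𝔭 ∉ T →
          (redOrder K 𝔭 P : ℤ) ∣ d * (redOrder K 𝔭 (fun i => P (j i)) : ℤ) := by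
  obtain ⟨s, j, hj, hindep, hpow⟩ := exists_independent_subfamily_zpow_mem_closure P
  choose c hc0 hc using hpow
  have hs : 0 < s := by
    obtain ⟨i₀, hi₀⟩ := hP
    refine Nat.pos_of_ne_zero fun hs => hi₀ (isOfFinOrder_iff_zpow_eq_one.mpr ⟨c i₀, hc0 i₀, ?_⟩)
    subst hs
    simpa [Set.range_eq_empty] using hc i₀
  refine ⟨s, j, hs, hj, hindep, ∏ i, c i, Finset.prod_ne_zero_iff.mpr fun i _ => hc0 i, ∅,
    fun 𝔭 h𝔭 _ => ?_⟩
  have := h𝔭.isPrime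
  rw [redOrder_eq_orderOf, redOrder_eq_orderOf]
  refine orderOf_dvd_prod_mul_orderOf_of_zpow_mem_closure (G := Kˣ ⧸ redOneSubgroup K 𝔭) c
    fun i => ?_
  have := Subgroup.mem_map_of_mem (QuotientGroup.mk' (redOneSubgroup K 𝔭)) (hc i)
  rwa [map_zpow, MonoidHom.map_closure, ← Set.range_comp] at this
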